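/- arXiv:2103.07917 — 3 statements merged into one kernel-verified Lean document; each statement's English description precedes it below -/
import Mathlib

section
/- Let p and q be distinct nonconstant meromorphic functions on a compact Riemann surface X of genus g, and let S = {α ∈ ℂ∞ : p⁻¹(α) = q⁻¹(α)}. Then S is a finite set. -/
open OnePoint Topology Manifold

/-- The finite part of a point of the Riemann sphere `OnePoint ℂ` (junk value `0` at `∞`). -/
noncomputable def down : OnePoint ℂ → ℂ :=
  OnePoint.rec (0 : ℂ) id

open Classical in
/-- Inversion `w ↦ 1/w` on the Riemann sphere, interchanging `0` and `∞`. -/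
noncomputable def sphereInv (w : OnePoint ℂ) : OnePoint ℂ :=
  if w = (∞ : OnePoint ℂ) then (((0 : ℂ)) : OnePoint ℂ)
  else if w = (((0 : ℂ)) : OnePoint ℂ) then ∞
  else (((down w)⁻¹ : ℂ) : OnePoint ℂ)

variable {X : Type*} [TopologicalSpace X] [ChartedSpace ℂ X]

/-- A `ℂ`-valued function on a Riemann surface is holomorphic at `x` if it is analytic
when read through a chart at `x`. -/
def HoloAt (f : X → ℂ) (x : X) : Prop :=
  AnalyticAt ℂ (f ∘ (chartAt ℂ x).symm) ((chartAt ℂ x) x)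

/-- A sphere-valued function is meromorphic (holomorphic as a map to `ℂ∞`) at `x`:
either it avoids `∞` at `x` and its finite part is holomorphic there, or it avoids `0`
at `x` and the finite part of its reciprocal is holomorphic there. -/
def MeromAt (f : X → OnePoint ℂ) (x : X) : Prop :=
  (f x ≠ ∞ ∧ HoloAt (fun y => down (f y)) x) ∨
  (f x ≠ (((0 : ℂ)) : OnePoint ℂ) ∧ HoloAt (fun y => down (sphereInv (f y))) x)

/-- A holomorphic map `X → ℂ∞`, i.e. a meromorphic function on the Riemann surface `X`. -/
def HolomorphicToSphere (f : X → OnePoint ℂ) : Prop :=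
  Continuous f ∧ ∀ x, MeromAt f x

/-- The function is nonconstant. -/
def Nonconst (f : X → OnePoint ℂ) : Prop := ¬ ∃ c, ∀ x, f x = c

/-- The degree of a nonconstant holomorphic map from a compact Riemann surface to the
Riemann sphere: the largest cardinality of a (set-theoretic) fiber, which is attained
at every unramified fiber. -/
noncomputable def sphDeg (f : X → OnePoint ℂ) : ℕ :=
  sSup (Set.range fun y : OnePoint ℂ => (f ⁻¹' {y}).ncard)

/-- The local multiplicity of `f` at `x`: the largest `n` such that every neighborhood
of `x` contains `n` preimages of some single value. -/
noncomputable def locMult (f : X → OnePoint ℂ) (x : X) : ℕ :=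
  sSup {n : ℕ | ∀ U ∈ nhds x, ∃ y, n ≤ (U ∩ f ⁻¹' {y}).ncard}

/-- `X` has genus `g`, characterized by the Riemann–Hurwitz formula
`2g - 2 = -2 deg f + Σ_x (mult_f(x) - 1)` for every nonconstant meromorphic `f` on `X`. -/
def HasGenus (X : Type*) [TopologicalSpace X] [ChartedSpace ℂ X] (g : ℕ) : Prop :=
  ∀ f : X → OnePoint ℂ, HolomorphicToSphere f → Nonconst f →
    2 * (g : ℤ) - 2 = -2 * (sphDeg f : ℤ) + ∑ᶠ x, ((locMult f x : ℤ) - 1)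

/-!
A nonconstant meromorphic function is an open map (open mapping theorem in a chart, with
`a ↦ 1/a` as the chart at `∞`), so on a compact connected surface it is surjective. Hence
every `α ∈ S` is `p x` for some `x ∈ p⁻¹(α) = q⁻¹(α)`, i.e. for a point with `p x = q x`.
By the isolated zeros principle in charts, the coincidence set of `p ≠ q` is discrete, and
being closed in a compact space it is finite; `S` lies in its image under `p`.
-/

open Filter Set

lemma coe_down {w : OnePoint ℂ} (h : w ≠ ∞) : ((down w : ℂ) : OnePoint ℂ) = w := by
  induction w using OnePoint.rec with
  | infty => exact absurd rfl h
  | coe a => rfl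

lemma sphereInv_infty : sphereInv ∞ = ((0 : ℂ) : OnePoint ℂ) := by
  simp [sphereInv]

lemma sphereInv_zero : sphereInv ((0 : ℂ) : OnePoint ℂ) = ∞ := by
  simp [sphereInv, OnePoint.coe_ne_infty]

lemma sphereInv_coe {a : ℂ} (ha : a ≠ 0) :
    sphereInv (a : OnePoint ℂ) = ((a⁻¹ : ℂ) : OnePoint ℂ) := by
  rw [sphereInv, if_neg (OnePoint.coe_ne_infty a), if_neg (by simpa using ha)]
  rfl

lemma down_sphereInv_coe {a : ℂ} (ha : a ≠ 0) : down (sphereInv a) = a⁻¹ := by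
  rw [sphereInv_coe ha]
  rfl

lemma sphereInv_involutive : Function.Involutive sphereInv := by
  intro w
  induction w using OnePoint.rec with
  | infty => rw [sphereInv_infty, sphereInv_zero]
  | coe a =>
    obtain rfl | ha := eq_or_ne a 0
    · rw [sphereInv_zero, sphereInv_infty]
    · rw [sphereInv_coe ha, sphereInv_coe (inv_ne_zero ha), inv_inv]

lemma sphereInv_ne_infty {w : OnePoint ℂ} (h : w ≠ ((0 : ℂ) : OnePoint ℂ)) : sphereInv w ≠ ∞ := by
  intro hw
  exact h (by rw [← sphereInv_involutive w, hw, sphereInv_infty])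

open Classical in
/-- The inverse of the standard chart of `ℂ∞` at `w`. -/
noncomputable def sphereParam (w : OnePoint ℂ) : ℂ → OnePoint ℂ :=
  if w = ∞ then sphereInv ∘ (↑) else (↑)

lemma sphereParam_injective (w : OnePoint ℂ) : Function.Injective (sphereParam w) := by
  unfold sphereParam
  split_ifs
  · exact sphereInv_involutive.injective.comp OnePoint.coe_injective
  · exact OnePoint.coe_injective

lemma nhds_infty_le_map_sphereInv_coe :
    𝓝 (∞ : OnePoint ℂ) ≤ map (sphereInv ∘ (↑)) (𝓝 (0 : ℂ)) := by
  rw [OnePoint.nhds_infty_eq]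
  refine sup_le ?_ ?_
  · calc map (↑) (coclosedCompact ℂ)
        = map (((↑) : ℂ → OnePoint ℂ) ∘ Inv.inv) (𝓝[≠] (0 : ℂ)) := by
          rw [coclosedCompact_eq_cocompact, ← Metric.cobounded_eq_cocompact,
            ← inv_nhdsNE_zero, ← Filter.map_inv, Filter.map_map]
      _ = map (sphereInv ∘ (↑)) (𝓝[≠] (0 : ℂ)) :=
          Filter.map_congr <| eventually_mem_nhdsWithin.mono fun a ha => (sphereInv_coe ha).symm
      _ ≤ map (sphereInv ∘ (↑)) (𝓝 (0 : ℂ)) := map_mono nhdsWithin_le_nhds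
  · rw [← sphereInv_zero]
    exact (Filter.map_pure _ _).symm.le.trans (map_mono (pure_le_nhds 0))

lemma nhds_le_map_sphereParam {w : OnePoint ℂ} {a : ℂ} (h : sphereParam w a = w) :
    𝓝 w ≤ map (sphereParam w) (𝓝 a) := by
  by_cases hw : w = ∞
  · subst hw
    simp only [sphereParam, if_pos, Function.comp_apply] at h ⊢
    obtain rfl : a = 0 := by
      by_contra ha
      exact OnePoint.coe_ne_infty _ ((sphereInv_coe ha).symm.trans h)
    exact nhds_infty_le_map_sphereInv_coe
  · simp only [sphereParam, if_neg hw] at h ⊢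
    rw [← h, OnePoint.isOpenEmbedding_coe.map_nhds_eq]

variable {x : X}

lemma HoloAt.analyticAt {G : X → ℂ} (hG : HoloAt G x) :
    AnalyticAt ℂ (G ∘ (chartAt ℂ x).symm) (chartAt ℂ x x) := hG

lemma HoloAt.inv {G : X → ℂ} (hG : HoloAt G x) (h0 : G x ≠ 0) : HoloAt (fun y => (G y)⁻¹) x :=
  AnalyticAt.inv hG (by simpa [(chartAt ℂ x).left_inv (mem_chart_source ℂ x)] using h0)

lemma HoloAt.eventually_eq_or_eventually_ne {G H : X → ℂ} (hG : HoloAt G x) (hH : HoloAt H x) :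
    (∀ᶠ y in 𝓝 x, G y = H y) ∨ ∀ᶠ y in 𝓝[≠] x, G y ≠ H y := by
  set e := chartAt ℂ x
  have hx : x ∈ e.source := mem_chart_source ℂ x
  refine (hG.analyticAt.eventually_eq_or_eventually_ne hH.analyticAt).imp
    (fun h => (e.eventually_nhds' (fun y => G y = H y) hx).1 h) (fun h => ?_)
  have hsub : e.symm ⁻¹' {x}ᶜ ⊆ {e x}ᶜ := fun z hz hzx =>
    hz (by rw [mem_singleton_iff.1 hzx, e.left_inv hx]; rfl)
  exact (e.eventually_nhdsWithin' (fun y => G y ≠ H y) hx).1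
    (h.filter_mono (nhdsWithin_mono _ hsub))

lemma HoloAt.eventually_constant_or_nhds_le_map_nhds {G : X → ℂ} (hG : HoloAt G x) :
    (∀ᶠ y in 𝓝 x, G y = G x) ∨ 𝓝 (G x) ≤ map G (𝓝 x) := by
  set e := chartAt ℂ x
  have hx : x ∈ e.source := mem_chart_source ℂ x
  have hGe : (G ∘ e.symm) (e x) = G x := by simp [e.left_inv hx]
  refine hG.analyticAt.eventually_constant_or_nhds_le_map_nhds.imp (fun h => ?_) (fun h => ?_)
  · rw [hGe] at h
    exact (e.eventually_nhds' (fun y => G y = G x) hx).1 h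
  · rwa [← e.symm_map_nhds_eq hx, Filter.map_map, ← hGe]

lemma MeromAt.exists_holoAt_eventually_eq {f : X → OnePoint ℂ} (hf : ContinuousAt f x)
    (hm : MeromAt f x) : ∃ G : X → ℂ, HoloAt G x ∧ ∀ᶠ y in 𝓝 x, f y = sphereParam (f x) (G y) := by
  rcases hm with ⟨hinf, hG⟩ | ⟨h0, hG⟩
  · refine ⟨_, hG, (hf.eventually_ne hinf).mono fun y hy => ?_⟩
    simp only [sphereParam, if_neg hinf, coe_down hy]
  by_cases hinf : f x = ∞
  · refine ⟨_, hG, (hf.eventually_ne h0).mono fun y hy => ?_⟩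
    simp only [sphereParam, if_pos hinf, Function.comp_apply, coe_down (sphereInv_ne_infty hy),
      sphereInv_involutive (f y)]
  -- Away from `0` and `∞`, `f` is the reciprocal of the finite part of `sphereInv ∘ f`.
  have hcoe : ∀ {w : OnePoint ℂ}, w ≠ ((0 : ℂ) : OnePoint ℂ) → w ≠ ∞ →
      ∃ a : ℂ, a ≠ 0 ∧ (a : OnePoint ℂ) = w := fun h0 hinf => by
    obtain ⟨a, rfl⟩ := OnePoint.ne_infty_iff_exists.mp hinf
    exact ⟨a, fun ha => h0 (by rw [ha]), rfl⟩
  obtain ⟨a, ha, hax⟩ := hcoe h0 hinf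
  refine ⟨_, hG.inv ?_, ((hf.eventually_ne h0).and (hf.eventually_ne hinf)).mono fun y hy => ?_⟩
  · rw [← hax, down_sphereInv_coe ha]
    exact inv_ne_zero ha
  · obtain ⟨b, hb, hby⟩ := hcoe hy.1 hy.2
    simp only [sphereParam, if_neg hinf, ← hby, down_sphereInv_coe hb, inv_inv]

lemma HolomorphicToSphere.eventuallyEq_or_eventually_ne {p q : X → OnePoint ℂ}
    (hp : HolomorphicToSphere p) (hq : HolomorphicToSphere q) (hx : p x = q x) :
    p =ᶠ[𝓝 x] q ∨ ∀ᶠ y in 𝓝[≠] x, p y ≠ q y := by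
  obtain ⟨G, hG, hpG⟩ := (hp.2 x).exists_holoAt_eventually_eq hp.1.continuousAt
  obtain ⟨H, hH, hqH⟩ := (hq.2 x).exists_holoAt_eventually_eq hq.1.continuousAt
  rw [← hx] at hqH
  refine (hG.eventually_eq_or_eventually_ne hH).imp (fun h => ?_) (fun h => ?_)
  · filter_upwards [hpG, hqH, h] with y hpy hqy hy
    rw [hpy, hqy, hy]
  · filter_upwards [nhdsWithin_le_nhds hpG, nhdsWithin_le_nhds hqH, h] with y hpy hqy hy
    rw [hpy, hqy]
    exact (sphereParam_injective _).ne hy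

lemma holomorphicToSphere_const (c : OnePoint ℂ) : HolomorphicToSphere (fun _ : X => c) := by
  refine ⟨continuous_const, fun x => ?_⟩
  by_cases hc : c = ∞
  · exact Or.inr ⟨hc ▸ OnePoint.infty_ne_coe 0, analyticAt_const⟩
  · exact Or.inl ⟨hc, analyticAt_const⟩

lemma HolomorphicToSphere.eq_of_eventuallyEq [PreconnectedSpace X] {p q : X → OnePoint ℂ}
    (hp : HolomorphicToSphere p) (hq : HolomorphicToSphere q) {x₀ : X} (h₀ : p =ᶠ[𝓝 x₀] q) :
    p = q := by
  set A : Set X := {x | p =ᶠ[𝓝 x] q}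
  have hclosed : IsClosed A := by
    refine isClosed_iff_frequently.2 fun x hfreq => ?_
    have hx : p x = q x :=
      (hfreq.mono fun y hy => hy.eq_of_nhds).mem_of_closed (isClosed_eq hp.1 hq.1)
    rcases hp.eventuallyEq_or_eventually_ne hq hx with hxA | hne
    · exact hxA
    obtain ⟨y, hyA, hy⟩ := (hfreq.and_eventually (eventually_nhdsWithin_iff.1 hne)).exists
    obtain rfl | hyx := eq_or_ne y x
    · exact hyA
    · exact absurd hyA.eq_of_nhds (hy hyx)
  have hA : A = univ :=
    IsClopen.eq_univ ⟨hclosed, isOpen_setOfPred_eventually_nhds⟩ ⟨x₀, h₀⟩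
  funext y
  exact (hA ▸ mem_univ y : y ∈ A).eq_of_nhds

lemma HolomorphicToSphere.finite_setOf_eq [CompactSpace X] [PreconnectedSpace X]
    {p q : X → OnePoint ℂ} (hp : HolomorphicToSphere p) (hq : HolomorphicToSphere q)
    (hne : p ≠ q) : {x | p x = q x}.Finite := by
  refine (isClosed_eq hp.1 hq.1).isCompact.finite (isDiscrete_iff_nhdsNE.2 fun x hx => ?_)
  exact inf_principal_eq_bot.2 <| (hp.eventuallyEq_or_eventually_ne hq hx).resolve_left
    fun h => hne (hp.eq_of_eventuallyEq hq h)

lemma HolomorphicToSphere.nhds_le_map_nhds [PreconnectedSpace X] {p : X → OnePoint ℂ}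
    (hp : HolomorphicToSphere p) (hpc : Nonconst p) (x : X) : 𝓝 (p x) ≤ map p (𝓝 x) := by
  obtain ⟨G, hG, hpG⟩ := (hp.2 x).exists_holoAt_eventually_eq hp.1.continuousAt
  have hGx : sphereParam (p x) (G x) = p x := hpG.self_of_nhds.symm
  rcases hG.eventually_constant_or_nhds_le_map_nhds with hconst | hopen
  · refine absurd ⟨p x, congrFun (hp.eq_of_eventuallyEq (holomorphicToSphere_const (p x))
      (x₀ := x) ?_)⟩ hpc
    filter_upwards [hpG, hconst] with y hpy hy
    rw [hpy, hy, hGx]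
  · calc 𝓝 (p x) ≤ map (sphereParam (p x)) (𝓝 (G x)) := nhds_le_map_sphereParam hGx
      _ ≤ map (sphereParam (p x)) (map G (𝓝 x)) := map_mono hopen
      _ = map p (𝓝 x) := by rw [Filter.map_map]; exact (Filter.map_congr hpG).symm

lemma HolomorphicToSphere.surjective [CompactSpace X] [ConnectedSpace X] {p : X → OnePoint ℂ}
    (hp : HolomorphicToSphere p) (hpc : Nonconst p) : Function.Surjective p := by
  have hopen : IsOpen (range p) := (IsOpenMap.of_nhds_le (hp.nhds_le_map_nhds hpc)).isOpen_range
  exact range_eq_univ.1 <|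
    IsClopen.eq_univ ⟨(isCompact_range hp.1).isClosed, hopen⟩ (range_nonempty p)

theorem stmt_6_general {X : Type*} [TopologicalSpace X] [CompactSpace X] [ConnectedSpace X]
    [ChartedSpace ℂ X]
    (p q : X → OnePoint ℂ) (hp : HolomorphicToSphere p) (hq : HolomorphicToSphere q)
    (hpc : Nonconst p) (hne : p ≠ q)
    (S : Set (OnePoint ℂ)) (hS : S = {α : OnePoint ℂ | p ⁻¹' {α} = q ⁻¹' {α}}) :
    S.Finite := by
  subst hS
  refine ((hp.finite_setOf_eq hq hne).image p).subset fun α hα => ?_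
  obtain ⟨x, rfl⟩ := hp.surjective hpc α
  have hqx : q x = p x := (Set.ext_iff.1 hα x).1 rfl
  exact ⟨x, hqx.symm, rfl⟩

/-- If `p ≠ q` are nonconstant meromorphic functions on a compact Riemann surface of
genus `g`, then the set `S` of values `α ∈ ℂ∞` with `p⁻¹(α) = q⁻¹(α)` is finite. -/
theorem stmt_6 {X : Type*} [TopologicalSpace X] [CompactSpace X] [T2Space X] [ConnectedSpace X]
    [ChartedSpace ℂ X] [IsManifold 𝓘(ℂ) (⊤ : WithTop ℕ∞) X] (g : ℕ) (hg : HasGenus X g)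
    (p q : X → OnePoint ℂ) (hp : HolomorphicToSphere p) (hq : HolomorphicToSphere q)
    (hpc : Nonconst p) (hqc : Nonconst q) (hne : p ≠ q)
    (S : Set (OnePoint ℂ)) (hS : S = {α : OnePoint ℂ | p ⁻¹' {α} = q ⁻¹' {α}}) :
    S.Finite :=
  stmt_6_general p q hp hq hpc hne S hS
end

section
/- Let p and q be distinct nonconstant rational functions on the Riemann sphere (i.e., nonconstant elements of ℂ(z) with p ≠ q), and let S = {α ∈ ℂ∞ : p⁻¹(α) = q⁻¹(α)}. Then (|S| − 2)·max(deg p, deg q) ≤ −2 + deg p + deg q; in particular |S| ≤ 3. -/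
open OnePoint Polynomial

/-- The degree of a rational function as a branched covering of the Riemann sphere:
the maximum of the degrees of its (coprime) numerator and denominator. -/
noncomputable def ratDeg (f : RatFunc ℂ) : ℕ := max f.num.natDegree f.denom.natDegree

/-- Evaluation of a rational function as a self-map of the Riemann sphere `OnePoint ℂ`. -/
noncomputable def evalSphere (f : RatFunc ℂ) : OnePoint ℂ → OnePoint ℂ :=
  OnePoint.rec
    (if f.denom.degree < f.num.degree then ∞
     else if f.num.degree < f.denom.degree then (((0 : ℂ)) : OnePoint ℂ)
     else ((f.num.leadingCoeff / f.denom.leadingCoeff : ℂ) : OnePoint ℂ))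
    (fun z => if f.denom.eval z = 0 then ∞
     else ((f.num.eval z / f.denom.eval z : ℂ) : OnePoint ℂ))

/-!
Riemann–Hurwitz gives a lower bound for the size of the preimage of a finite set `T ⊆ ℂ∞` under a
rational function `f` of degree `D`: `|f⁻¹(T)| ≥ (|T| - 2)·D + 2`. Over `α` the finite part of
the fibre is cut out by a polynomial `fiberNum f α` of degree `D` (less exactly when `f(∞) = α`),
and its multiple roots are absorbed by `divRadical`, which divides the Wronskian of the numerator
and the denominator of `f`; the Wronskian has degree less than `D + deg (fiberNum f (f ∞))`.

If `p` and `q` have the same fibres over `S`, then `p = q` on `p⁻¹(S)` and on `q⁻¹(S)`, and `p - q`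
has at most `deg p + deg q` zeros on the sphere. Comparing with the lower bound for `p` and for `q`
gives the inequality.
-/

open UniqueFactorizationMonoid EuclideanDomain

section Polynomial

theorem Polynomial.natDegree_lt_of_coeff_eq_zero {R : Type*} [Semiring R] {P : R[X]} {n : ℕ}
    (hP : P ≠ 0) (hle : P.natDegree ≤ n) (hn : P.coeff n = 0) : P.natDegree < n :=
  hle.lt_of_ne fun h => hP (leadingCoeff_eq_zero.mp (by rwa [leadingCoeff, h]))

variable {k : Type*} [Field k] [IsAlgClosed k] [DecidableEq k]

theorem Polynomial.natDegree_radical_eq_card_roots_toFinset {P : k[X]} (hP : P ≠ 0) :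
    (radical P).natDegree = P.roots.toFinset.card := by
  have hsep : (radical P).Separable := PerfectField.separable_iff_squarefree.mpr squarefree_radical
  have hroots : (radical P).roots.toFinset = P.roots.toFinset := by
    ext z
    simp only [Multiset.mem_toFinset, mem_roots radical_ne_zero, mem_roots hP, ← dvd_iff_isRoot,
      dvd_radical_iff_of_irreducible (irreducible_X_sub_C z) hP]
  rw [← hroots, Multiset.toFinset_card_of_nodup (nodup_roots hsep),
    IsAlgClosed.card_roots_eq_natDegree]

theorem Polynomial.card_roots_toFinset_add_natDegree_divRadical {P : k[X]} (hP : P ≠ 0) :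
    P.roots.toFinset.card + (divRadical P).natDegree = P.natDegree := by
  rw [← natDegree_radical_eq_card_roots_toFinset hP, ← natDegree_mul radical_ne_zero
    (divRadical_ne_zero hP), radical_mul_divRadical]

end Polynomial

open scoped Classical in
theorem OnePoint.ncard_eq_ncard_preimage_coe_add {X : Type*} {s : Set (OnePoint X)}
    (hs : ((↑) ⁻¹' s : Set X).Finite) :
    s.ncard = ((↑) ⁻¹' s : Set X).ncard + if ∞ ∈ s then 1 else 0 := by
  have himage : ((↑) '' ((↑) ⁻¹' s : Set X) : Set (OnePoint X)) = s \ {∞} := by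
    ext x
    induction x using OnePoint.rec <;> simp
  rw [← Set.ncard_image_of_injective ((↑) ⁻¹' s : Set X) coe_injective, himage]
  split_ifs with h
  · exact (Set.ncard_sdiff_singleton_add_one h
      ((himage ▸ hs.image _).of_sdiff (Set.finite_singleton ∞))).symm
  · rw [Set.sdiff_singleton_eq_self h, add_zero]

theorem Set.eqOn_preimage_of_forall_preimage_singleton_eq {α β : Type*} {f g : α → β} {T : Set β}
    (h : ∀ b ∈ T, f ⁻¹' {b} = g ⁻¹' {b}) : (f ⁻¹' T).EqOn f g := fun x hx =>
  Eq.symm (show x ∈ g ⁻¹' {f x} by rw [← h (f x) hx]; rfl)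

section Fibers

variable {K : Type*} [Field K]

/-- `fiberNum f α / fiberDenom f α` is a reduced form of `f - α`, and of `-1 / f` when `α = ∞`;
so the zeros of `fiberNum f α` are the finite points of the fibre of `f` over `α`. -/
noncomputable def fiberNum (f : RatFunc K) : OnePoint K → K[X] :=
  OnePoint.rec f.denom fun a => f.num - C a * f.denom

noncomputable def fiberDenom (f : RatFunc K) : OnePoint K → K[X] :=
  OnePoint.rec (-f.num) fun _ => f.denom

noncomputable def subNum (p q : RatFunc K) : K[X] := p.num * q.denom - q.num * p.denom

@[simp] theorem fiberNum_infty (f : RatFunc K) : fiberNum f ∞ = f.denom := rfl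

@[simp] theorem fiberNum_coe (f : RatFunc K) (a : K) : fiberNum f a = f.num - C a * f.denom := rfl

@[simp] theorem fiberDenom_infty (f : RatFunc K) : fiberDenom f ∞ = -f.num := rfl

@[simp] theorem fiberDenom_coe (f : RatFunc K) (a : K) : fiberDenom f a = f.denom := rfl

theorem wronskian_fiberNum_fiberDenom (f : RatFunc K) (α : OnePoint K) :
    wronskian (fiberNum f α) (fiberDenom f α) = wronskian f.num f.denom := by
  induction α using OnePoint.rec with
  | infty => rw [fiberNum_infty, fiberDenom_infty, wronskian_neg_right, wronskian_neg_eq]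
  | coe a =>
    rw [fiberNum_coe, fiberDenom_coe, wronskian, wronskian, derivative_sub, derivative_C_mul]
    ring

theorem subNum_eq_fiberNum_mul_fiberDenom (p q : RatFunc K) (α : OnePoint K) :
    subNum p q = fiberNum p α * fiberDenom q α - fiberNum q α * fiberDenom p α := by
  induction α using OnePoint.rec with
  | infty => rw [subNum, fiberNum_infty, fiberDenom_infty, fiberNum_infty, fiberDenom_infty]; ring
  | coe a => rw [subNum, fiberNum_coe, fiberDenom_coe, fiberNum_coe, fiberDenom_coe]; ring

theorem isCoprime_fiberNum (f : RatFunc K) {α β : OnePoint K} (h : α ≠ β) :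
    IsCoprime (fiberNum f α) (fiberNum f β) := by
  have hcop (a : K) : IsCoprime (fiberNum f a) f.denom :=
    IsCoprime.sub_mul_right_left_iff.mpr f.isCoprime_num_denom
  induction α using OnePoint.rec with
  | infty =>
    induction β using OnePoint.rec with
    | infty => exact absurd rfl h
    | coe b => exact (hcop b).symm
  | coe a =>
    induction β using OnePoint.rec with
    | infty => exact hcop a
    | coe b =>
      have hb : fiberNum f b = C (a - b) * f.denom + fiberNum f a * 1 := by
        simp only [fiberNum_coe, map_sub]; ring
      have hab : IsUnit (C (a - b)) :=
        isUnit_C.mpr (sub_ne_zero.mpr fun e => h (congrArg _ e)).isUnit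
      rw [hb, IsCoprime.add_mul_left_right_iff, isCoprime_mul_unit_left_right hab]
      exact hcop a

theorem not_isRoot_num_and_denom (f : RatFunc K) (z : K) :
    ¬ (f.num.IsRoot z ∧ f.denom.IsRoot z) := by
  rintro ⟨hnum, hdenom⟩
  obtain ⟨u, v, h⟩ := f.isCoprime_num_denom
  simpa [hnum.eq_zero, hdenom.eq_zero] using congrArg (eval z) h

theorem exists_eq_C_of_natDegree_eq_zero {f : RatFunc K} (hnum : f.num.natDegree = 0)
    (hdenom : f.denom.natDegree = 0) : ∃ c : K, f = RatFunc.C c := by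
  refine ⟨f.num.coeff 0, ?_⟩
  conv_lhs => rw [← RatFunc.num_div_denom f, f.monic_denom.natDegree_eq_zero.mp hdenom,
    eq_C_of_natDegree_eq_zero hnum]
  rw [map_one, _root_.div_one, RatFunc.algebraMap_C]

theorem fiberNum_ne_zero {f : RatFunc K} (hf : ¬ ∃ c : K, f = RatFunc.C c) (α : OnePoint K) :
    fiberNum f α ≠ 0 := by
  induction α using OnePoint.rec with
  | infty => exact f.denom_ne_zero
  | coe a =>
    refine fun h => hf ⟨a, ?_⟩
    rw [fiberNum_coe, sub_eq_zero] at h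
    rw [← RatFunc.num_div_denom f, h, map_mul, RatFunc.algebraMap_C,
      mul_div_cancel_right₀ _ (RatFunc.algebraMap_ne_zero f.denom_ne_zero)]

theorem wronskian_num_denom_ne_zero [CharZero K] {f : RatFunc K}
    (hf : ¬ ∃ c : K, f = RatFunc.C c) : wronskian f.num f.denom ≠ 0 := by
  rw [Ne, f.isCoprime_num_denom.wronskian_eq_zero_iff, derivative_eq_zero, derivative_eq_zero]
  exact fun ⟨hnum, hdenom⟩ => hf (exists_eq_C_of_natDegree_eq_zero hnum hdenom)

theorem sum_natDegree_divRadical_fiberNum_le [CharZero K] [DecidableEq K] {f : RatFunc K}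
    (hf : ¬ ∃ c : K, f = RatFunc.C c) (T : Finset (OnePoint K)) :
    ∑ α ∈ T, (divRadical (fiberNum f α)).natDegree ≤ (wronskian f.num f.denom).natDegree := by
  rw [← natDegree_prod _ _ fun α _ => divRadical_ne_zero (fiberNum_ne_zero hf α)]
  refine natDegree_le_of_dvd (Finset.prod_dvd_of_coprime ?_ fun α _ => ?_)
    (wronskian_num_denom_ne_zero hf)
  · exact fun α _ β _ hαβ => (isCoprime_fiberNum f hαβ).divRadical
  · exact wronskian_fiberNum_fiberDenom f α ▸ divRadical_dvd_wronskian_left _ _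

theorem subNum_ne_zero {p q : RatFunc K} (hne : p ≠ q) : subNum p q ≠ 0 := by
  rw [subNum, sub_ne_zero]
  refine fun h => hne ?_
  rw [← RatFunc.num_div_denom p, ← RatFunc.num_div_denom q,
    div_eq_div_iff (RatFunc.algebraMap_ne_zero p.denom_ne_zero)
      (RatFunc.algebraMap_ne_zero q.denom_ne_zero), ← map_mul, ← map_mul, h]

end Fibers

section Sphere

theorem natDegree_num_le_ratDeg (f : RatFunc ℂ) : f.num.natDegree ≤ ratDeg f := le_max_left _ _

theorem natDegree_denom_le_ratDeg (f : RatFunc ℂ) : f.denom.natDegree ≤ ratDeg f :=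
  le_max_right _ _

theorem ratDeg_pos {f : RatFunc ℂ} (hf : ¬ ∃ c : ℂ, f = RatFunc.C c) : 0 < ratDeg f := by
  refine Nat.pos_of_ne_zero fun h => hf (exists_eq_C_of_natDegree_eq_zero ?_ ?_)
  · exact Nat.eq_zero_of_le_zero (h ▸ natDegree_num_le_ratDeg f)
  · exact Nat.eq_zero_of_le_zero (h ▸ natDegree_denom_le_ratDeg f)

theorem natDegree_fiberNum_le (f : RatFunc ℂ) (α : OnePoint ℂ) :
    (fiberNum f α).natDegree ≤ ratDeg f := by
  induction α using OnePoint.rec with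
  | infty => exact natDegree_denom_le_ratDeg f
  | coe a =>
    exact (natDegree_sub_le _ _).trans <| max_le (natDegree_num_le_ratDeg f)
      ((natDegree_C_mul_le _ _).trans (natDegree_denom_le_ratDeg f))

theorem natDegree_fiberDenom_le (f : RatFunc ℂ) (α : OnePoint ℂ) :
    (fiberDenom f α).natDegree ≤ ratDeg f := by
  induction α using OnePoint.rec with
  | infty => exact (natDegree_neg _).le.trans (natDegree_num_le_ratDeg f)
  | coe a => exact natDegree_denom_le_ratDeg f

theorem evalSphere_coe_eq_iff (f : RatFunc ℂ) (z : ℂ) (α : OnePoint ℂ) :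
    evalSphere f z = α ↔ (fiberNum f α).IsRoot z := by
  have hval : evalSphere f z = if f.denom.eval z = 0 then ∞
      else ((f.num.eval z / f.denom.eval z : ℂ) : OnePoint ℂ) := rfl
  induction α using OnePoint.rec with
  | infty => by_cases h : f.denom.eval z = 0 <;> simp [hval, h]
  | coe a =>
    by_cases h : f.denom.eval z = 0
    · have hnum : f.num.eval z ≠ 0 := fun hnum => not_isRoot_num_and_denom f z ⟨hnum, h⟩
      simp [hval, h, hnum]
    · simp [hval, h, div_eq_iff h, sub_eq_zero]

theorem num_coeff_ne_zero_or_denom_coeff_ne_zero (f : RatFunc ℂ) :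
    f.num.coeff (ratDeg f) ≠ 0 ∨ f.denom.coeff (ratDeg f) ≠ 0 := by
  by_cases h : f.num.natDegree ≤ f.denom.natDegree
  · right
    rw [ratDeg, max_eq_right h, f.monic_denom.coeff_natDegree]
    exact one_ne_zero
  · left
    have hnum : f.num ≠ 0 := by rintro hnum; simp [hnum] at h
    rw [ratDeg, max_eq_left (not_le.mp h).le, coeff_natDegree]
    exact leadingCoeff_ne_zero.mpr hnum

theorem evalSphere_infty (f : RatFunc ℂ) :
    evalSphere f ∞ = if f.denom.coeff (ratDeg f) = 0 then ∞
      else ((f.num.coeff (ratDeg f) / f.denom.coeff (ratDeg f) : ℂ) : OnePoint ℂ) := by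
  have hden : f.denom.degree = f.denom.natDegree := degree_eq_natDegree f.denom_ne_zero
  have hval : evalSphere f ∞ = if f.denom.degree < f.num.degree then ∞
     else if f.num.degree < f.denom.degree then (((0 : ℂ)) : OnePoint ℂ)
     else ((f.num.leadingCoeff / f.denom.leadingCoeff : ℂ) : OnePoint ℂ) := rfl
  rcases lt_trichotomy f.num.degree f.denom.degree with h | h | h
  · have hD : ratDeg f = f.denom.natDegree := max_eq_right (natDegree_le_natDegree h.le)
    rw [hval, if_neg h.not_gt, if_pos h, hD, f.monic_denom.coeff_natDegree,
      coeff_eq_zero_of_degree_lt (hden ▸ h)]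
    simp
  · have hnum : f.num ≠ 0 := fun hnum => f.denom_ne_zero (by simpa [hnum] using h.symm)
    have hnat : f.num.natDegree = f.denom.natDegree := natDegree_eq_of_degree_eq h
    have hD : ratDeg f = f.num.natDegree := by rw [ratDeg, hnat, max_self]
    rw [hval, if_neg h.not_gt, if_neg h.not_lt, hD, coeff_natDegree, hnat,
      f.monic_denom.coeff_natDegree, f.monic_denom.leadingCoeff]
    simp
  · have hnum : f.num ≠ 0 := fun hnum => by simp [hnum] at h
    have hD : ratDeg f = f.num.natDegree := max_eq_left (natDegree_le_natDegree h.le)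
    rw [hval, if_pos h, hD, coeff_eq_zero_of_degree_lt (degree_eq_natDegree hnum ▸ h), if_pos rfl]

theorem evalSphere_infty_eq_iff (f : RatFunc ℂ) (α : OnePoint ℂ) :
    evalSphere f ∞ = α ↔ (fiberNum f α).coeff (ratDeg f) = 0 := by
  rw [evalSphere_infty]
  induction α using OnePoint.rec with
  | infty => split_ifs with h <;> simp [h]
  | coe a =>
    rw [fiberNum_coe, coeff_sub, coeff_C_mul]
    split_ifs with h
    · simpa [h] using (num_coeff_ne_zero_or_denom_coeff_ne_zero f).resolve_right (not_not.mpr h)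
    · rw [coe_eq_coe, div_eq_iff h, sub_eq_zero]

theorem natDegree_fiberNum_of_ne {f : RatFunc ℂ} {α : OnePoint ℂ} (hα : evalSphere f ∞ ≠ α) :
    (fiberNum f α).natDegree = ratDeg f :=
  natDegree_eq_of_le_of_coeff_ne_zero (natDegree_fiberNum_le f α)
    (mt (evalSphere_infty_eq_iff f α).mpr hα)

open scoped Classical in
theorem sum_natDegree_fiberNum (f : RatFunc ℂ) (T : Finset (OnePoint ℂ)) :
    ∑ α ∈ T, ((fiberNum f α).natDegree : ℤ) = T.card * ratDeg f
      - if evalSphere f ∞ ∈ T then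
          (ratDeg f - (fiberNum f (evalSphere f ∞)).natDegree : ℤ) else 0 := by
  have hterm (α : OnePoint ℂ) : ((fiberNum f α).natDegree : ℤ) = ratDeg f
      - if evalSphere f ∞ = α then
          (ratDeg f - (fiberNum f (evalSphere f ∞)).natDegree : ℤ) else 0 := by
    split_ifs with h
    · rw [h]; ring
    · rw [natDegree_fiberNum_of_ne h, sub_zero]
  rw [Finset.sum_congr rfl fun α _ => hterm α, Finset.sum_sub_distrib, Finset.sum_ite_eq,
    Finset.sum_const, nsmul_eq_mul]

end Sphere

section LowerBound

variable {f : RatFunc ℂ} (hf : ¬ ∃ c : ℂ, f = RatFunc.C c)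
include hf

theorem natDegree_fiberNum_evalSphere_infty_lt :
    (fiberNum f (evalSphere f ∞)).natDegree < ratDeg f :=
  natDegree_lt_of_coeff_eq_zero (fiberNum_ne_zero hf _) (natDegree_fiberNum_le f _)
    ((evalSphere_infty_eq_iff f _).mp rfl)

theorem natDegree_wronskian_num_denom_lt :
    (wronskian f.num f.denom).natDegree < (fiberNum f (evalSphere f ∞)).natDegree + ratDeg f := by
  rw [← wronskian_fiberNum_fiberDenom f (evalSphere f ∞)]
  refine (natDegree_wronskian_lt_add ?_).trans_le (by gcongr; exact natDegree_fiberDenom_le f _)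
  rw [wronskian_fiberNum_fiberDenom]
  exact wronskian_num_denom_ne_zero hf

open scoped Classical in
theorem ncard_preimage_evalSphere (T : Finset (OnePoint ℂ)) :
    (evalSphere f ⁻¹' ↑T).ncard
      = ∑ α ∈ T, (fiberNum f α).roots.toFinset.card + if evalSphere f ∞ ∈ T then 1 else 0 := by
  have hcoe : ((↑) ⁻¹' (evalSphere f ⁻¹' ↑T) : Set ℂ)
      = ↑(T.biUnion fun α => (fiberNum f α).roots.toFinset) := by
    ext z
    simp [mem_roots (fiberNum_ne_zero hf _), -IsRoot.def, ← evalSphere_coe_eq_iff]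
  have hdisj : (T : Set (OnePoint ℂ)).PairwiseDisjoint fun α => (fiberNum f α).roots.toFinset := by
    refine fun α _ β _ hαβ => Finset.disjoint_left.mpr fun z hzα hzβ => hαβ ?_
    simp only [Multiset.mem_toFinset, mem_roots (fiberNum_ne_zero hf _),
      ← evalSphere_coe_eq_iff] at hzα hzβ
    exact hzα.symm.trans hzβ
  rw [OnePoint.ncard_eq_ncard_preimage_coe_add (hcoe ▸ Finset.finite_toSet _), hcoe,
    Set.ncard_coe_finset, Finset.card_biUnion hdisj]
  simp

theorem sub_two_mul_ratDeg_add_two_le_ncard_preimage (T : Finset (OnePoint ℂ)) :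
    ((T.card : ℤ) - 2) * ratDeg f + 2 ≤ (evalSphere f ⁻¹' ↑T).ncard := by
  have hsum : ∑ α ∈ T, ((fiberNum f α).roots.toFinset.card : ℤ)
      = ∑ α ∈ T, ((fiberNum f α).natDegree : ℤ)
        - ∑ α ∈ T, ((divRadical (fiberNum f α)).natDegree : ℤ) := by
    rw [← Finset.sum_sub_distrib]
    refine Finset.sum_congr rfl fun α _ => ?_
    rw [← card_roots_toFinset_add_natDegree_divRadical (fiberNum_ne_zero hf α)]
    push_cast
    ring
  have hram : ∑ α ∈ T, ((divRadical (fiberNum f α)).natDegree : ℤ)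
      < (fiberNum f (evalSphere f ∞)).natDegree + ratDeg f := by
    exact_mod_cast (sum_natDegree_divRadical_fiberNum_le hf T).trans_lt
      (natDegree_wronskian_num_denom_lt hf)
  have hinfty : ((fiberNum f (evalSphere f ∞)).natDegree : ℤ) < ratDeg f := by
    exact_mod_cast natDegree_fiberNum_evalSphere_infty_lt hf
  rw [ncard_preimage_evalSphere hf T]
  push_cast
  rw [hsum, sum_natDegree_fiberNum f T]
  split_ifs <;> linarith

end LowerBound

section UpperBound

variable {p q : RatFunc ℂ}

theorem natDegree_subNum_le : (subNum p q).natDegree ≤ ratDeg p + ratDeg q := by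
  refine (natDegree_sub_le _ _).trans (max_le ?_ ?_) <;> refine natDegree_mul_le.trans ?_
  · exact add_le_add (natDegree_num_le_ratDeg p) (natDegree_denom_le_ratDeg q)
  · exact (add_le_add (natDegree_num_le_ratDeg q) (natDegree_denom_le_ratDeg p)).trans_eq
      (add_comm _ _)

theorem isRoot_subNum {z : ℂ} (h : evalSphere p z = evalSphere q z) : (subNum p q).IsRoot z := by
  have hp := (evalSphere_coe_eq_iff p z _).mp rfl
  have hq := (evalSphere_coe_eq_iff q z _).mp h.symm
  rw [subNum_eq_fiberNum_mul_fiberDenom p q (evalSphere p z)]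
  simp [hp.eq_zero, hq.eq_zero]

theorem coeff_subNum_eq_zero (h : evalSphere p ∞ = evalSphere q ∞) :
    (subNum p q).coeff (ratDeg p + ratDeg q) = 0 := by
  rw [subNum_eq_fiberNum_mul_fiberDenom p q (evalSphere p ∞), coeff_sub,
    coeff_mul_add_eq_of_natDegree_le (natDegree_fiberNum_le p _) (natDegree_fiberDenom_le q _),
    add_comm, coeff_mul_add_eq_of_natDegree_le (natDegree_fiberNum_le q _)
      (natDegree_fiberDenom_le p _), (evalSphere_infty_eq_iff p _).mp rfl,
    (evalSphere_infty_eq_iff q _).mp h.symm, zero_mul, zero_mul, sub_zero]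

theorem ncard_le_ratDeg_add_ratDeg (hne : p ≠ q) {s : Set (OnePoint ℂ)}
    (hs : s.EqOn (evalSphere p) (evalSphere q)) : s.ncard ≤ ratDeg p + ratDeg q := by
  have hR := subNum_ne_zero hne
  have hcoe : ((↑) ⁻¹' s : Set ℂ) ⊆ ↑(subNum p q).roots.toFinset := fun z hz => by
    simpa [mem_roots hR, -IsRoot.def] using isRoot_subNum (hs hz)
  have hroots : ((↑) ⁻¹' s : Set ℂ).ncard ≤ (subNum p q).natDegree :=
    calc ((↑) ⁻¹' s : Set ℂ).ncard ≤ (subNum p q).roots.toFinset.card :=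
          Set.ncard_coe_finset _ ▸ Set.ncard_le_ncard hcoe
      _ ≤ (subNum p q).natDegree := (Multiset.toFinset_card_le _).trans (card_roots' _)
  rw [OnePoint.ncard_eq_ncard_preimage_coe_add ((Finset.finite_toSet _).subset hcoe)]
  split_ifs with hinf
  · have := natDegree_lt_of_coeff_eq_zero hR natDegree_subNum_le (coeff_subNum_eq_zero (hs hinf))
    omega
  · have : (subNum p q).natDegree ≤ ratDeg p + ratDeg q := natDegree_subNum_le
    omega

theorem sub_two_mul_ratDeg_add_two_le_of_forall_preimage_eq (hp : ¬ ∃ c : ℂ, p = RatFunc.C c)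
    (hne : p ≠ q) {T : Finset (OnePoint ℂ)}
    (hT : ∀ α ∈ T, evalSphere p ⁻¹' {α} = evalSphere q ⁻¹' {α}) :
    ((T.card : ℤ) - 2) * ratDeg p + 2 ≤ ratDeg p + ratDeg q :=
  (sub_two_mul_ratDeg_add_two_le_ncard_preimage hp T).trans <| by
    exact_mod_cast ncard_le_ratDeg_add_ratDeg hne
      (Set.eqOn_preimage_of_forall_preimage_singleton_eq hT)

end UpperBound

/-- Genus-0 case of the main theorem: for distinct nonconstant rational functions
`p, q` on the Riemann sphere and `S = {α : p⁻¹(α) = q⁻¹(α)}`,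
`(|S| - 2)·max(deg p, deg q) ≤ -2 + deg p + deg q`; in particular `|S| ≤ 3`. -/
theorem stmt_10 (p q : RatFunc ℂ)
    (hpc : ¬ ∃ c : ℂ, p = RatFunc.C c) (hqc : ¬ ∃ c : ℂ, q = RatFunc.C c) (hne : p ≠ q)
    (S : Set (OnePoint ℂ))
    (hS : S = {α : OnePoint ℂ | evalSphere p ⁻¹' {α} = evalSphere q ⁻¹' {α}}) :
    ((S.ncard : ℤ) - 2) * (max (ratDeg p) (ratDeg q) : ℤ)
      ≤ -2 + (ratDeg p : ℤ) + (ratDeg q : ℤ) ∧ S.ncard ≤ 3 := by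
  have hp : (1 : ℤ) ≤ ratDeg p := by exact_mod_cast ratDeg_pos hpc
  have hq : (1 : ℤ) ≤ ratDeg q := by exact_mod_cast ratDeg_pos hqc
  have hmax : max (ratDeg p : ℤ) (ratDeg q) = ratDeg p ∨ max (ratDeg p : ℤ) (ratDeg q) = ratDeg q :=
    max_choice _ _
  have hbound : ((S.ncard : ℤ) - 2) * (max (ratDeg p) (ratDeg q) : ℤ)
      ≤ -2 + (ratDeg p : ℤ) + (ratDeg q : ℤ) := by
    rcases S.finite_or_infinite with hfin | hinf
    · obtain ⟨T, rfl⟩ := hfin.exists_finset_coe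
      have hfib (α) (hα : α ∈ T) : evalSphere p ⁻¹' {α} = evalSphere q ⁻¹' {α} := by
        rw [← Finset.mem_coe, hS] at hα
        exact hα
      have hboundp := sub_two_mul_ratDeg_add_two_le_of_forall_preimage_eq hpc hne hfib
      have hboundq := sub_two_mul_ratDeg_add_two_le_of_forall_preimage_eq hqc hne.symm
        fun α hα => (hfib α hα).symm
      rw [Set.ncard_coe_finset]
      rcases hmax with h | h <;> rw [h] <;> linarith
    · rw [hinf.ncard, Nat.cast_zero]
      rcases hmax with h | h <;> rw [h] <;> linarith
  refine ⟨hbound, Nat.le_of_lt_succ ?_⟩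
  have hM : (1 : ℤ) ≤ max (ratDeg p : ℤ) (ratDeg q) := hp.trans (le_max_left _ _)
  have hsum : (ratDeg p : ℤ) + ratDeg q ≤ 2 * max (ratDeg p : ℤ) (ratDeg q) := by
    linarith [le_max_left (ratDeg p : ℤ) (ratDeg q), le_max_right (ratDeg p : ℤ) (ratDeg q)]
  have : (S.ncard : ℤ) < 4 := by nlinarith
  exact_mod_cast this
end

section
/- Let p and q be two distinct nonconstant polynomials with complex coefficients. Then the set S of complex numbers α such that p and q have the same set of α-points, i.e., {z ∈ ℂ : p(z) = α} = {z ∈ ℂ : q(z) = α}, together with the point ∞ (which is always in S since p⁻¹(∞) = q⁻¹(∞) = {∞}), has cardinality at most 3; equivalently, there are at most 2 complex numbers α with p⁻¹(α) = q⁻¹(α) as subsets of ℂ. -/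
open Polynomial Finset

private lemma sum_count_le' {α : Type*} [DecidableEq α] (T : Finset α) (s : Multiset α) :
    ∑ z ∈ T, s.count z ≤ Multiset.card s := by
  calc ∑ z ∈ T, s.count z = ∑ z ∈ T ∩ s.toFinset, s.count z := by
        refine (Finset.sum_subset (Finset.inter_subset_left) ?_).symm
        intro x hx hx'
        simp only [Finset.mem_inter, hx, true_and] at hx'
        simpa [Multiset.count_eq_zero] using fun h => hx' (Multiset.mem_toFinset.mpr h)
    _ ≤ ∑ z ∈ s.toFinset, s.count z :=
        Finset.sum_le_sum_of_subset (Finset.inter_subset_right)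
    _ = Multiset.card s := Multiset.toFinset_sum_count_eq s

private lemma fiber_sum (f : Polynomial ℂ) (hf : 0 < f.natDegree) (α : ℂ) :
    ∑ z ∈ (f - C α).roots.toFinset, (f.derivative.roots.count z + 1) = f.natDegree := by
  set g := f - C α with hgdef
  have hg : g ≠ 0 := by
    intro h
    have := natDegree_sub_C (p := f) (a := α)
    rw [← hgdef, h, natDegree_zero] at this
    omega
  have hd : g.derivative = f.derivative := by
    simp [hgdef]
  have hcard : Multiset.card g.roots = f.natDegree := by
    rw [splits_iff_card_roots.mp (IsAlgClosed.splits g), hgdef, natDegree_sub_C]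
  calc ∑ z ∈ g.roots.toFinset, (f.derivative.roots.count z + 1)
      = ∑ z ∈ g.roots.toFinset, g.roots.count z := by
        refine Finset.sum_congr rfl fun z hz => ?_
        have hroot : g.IsRoot z := (mem_roots hg).mp (Multiset.mem_toFinset.mp hz)
        rw [count_roots, count_roots, ← hd, derivative_rootMultiplicity_of_root hroot]
        have : 1 ≤ rootMultiplicity z g := (rootMultiplicity_pos hg).mpr hroot
        omega
    _ = Multiset.card g.roots := Multiset.toFinset_sum_count_eq g.roots
    _ = f.natDegree := hcard

private lemma mem_fiber (f : Polynomial ℂ) (hf : 0 < f.natDegree) (α z : ℂ) :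
    z ∈ (f - C α).roots.toFinset ↔ f.eval z = α := by
  have hg : f - C α ≠ 0 := by
    intro h
    have h2 := natDegree_sub_C (p := f) (a := α)
    rw [h, natDegree_zero] at h2
    omega
  rw [Multiset.mem_toFinset, mem_roots hg, IsRoot.def, eval_sub, eval_C, sub_eq_zero]

private lemma main_count (f : Polynomial ℂ) (hf : 0 < f.natDegree) (a b c : ℂ)
    (hab : a ≠ b) (hac : a ≠ c) (hbc : b ≠ c) :
    2 * f.natDegree + 1 ≤
      ((f - C a).roots.toFinset ∪ (f - C b).roots.toFinset ∪ (f - C c).roots.toFinset).card := by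
  set Fa := (f - C a).roots.toFinset
  set Fb := (f - C b).roots.toFinset
  set Fc := (f - C c).roots.toFinset
  have hdisj : ∀ α β : ℂ, α ≠ β → Disjoint ((f - C α).roots.toFinset) ((f - C β).roots.toFinset) := by
    intro α β hαβ
    rw [Finset.disjoint_left]
    intro z hz1 hz2
    rw [mem_fiber f hf] at hz1 hz2
    exact hαβ (hz1 ▸ hz2.symm ▸ rfl)
  have d1 : Disjoint Fa Fb := hdisj a b hab
  have d2 : Disjoint Fa Fc := hdisj a c hac
  have d3 : Disjoint Fb Fc := hdisj b c hbc
  have d4 : Disjoint (Fa ∪ Fb) Fc := Finset.disjoint_union_left.mpr ⟨d2, d3⟩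
  have hsum : ∑ z ∈ Fa ∪ Fb ∪ Fc, (f.derivative.roots.count z + 1) = 3 * f.natDegree := by
    rw [Finset.sum_union d4, Finset.sum_union d1, fiber_sum f hf, fiber_sum f hf, fiber_sum f hf]
    ring
  have hcount : ∑ z ∈ Fa ∪ Fb ∪ Fc, f.derivative.roots.count z ≤ f.natDegree - 1 := by
    calc ∑ z ∈ Fa ∪ Fb ∪ Fc, f.derivative.roots.count z
        ≤ Multiset.card f.derivative.roots := sum_count_le' _ _
      _ ≤ f.derivative.natDegree := f.derivative.card_roots'
      _ ≤ f.natDegree - 1 := natDegree_derivative_le f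
  have hsplit : ∑ z ∈ Fa ∪ Fb ∪ Fc, (f.derivative.roots.count z + 1)
      = (∑ z ∈ Fa ∪ Fb ∪ Fc, f.derivative.roots.count z) + (Fa ∪ Fb ∪ Fc).card := by
    rw [Finset.sum_add_distrib, Finset.sum_const, smul_eq_mul, mul_one]
  omega

/-- For distinct nonconstant complex polynomials `p ≠ q`, there are at most `2` complex
numbers `α` with `{z | p(z) = α} = {z | q(z) = α}` (equivalently, together with `∞` the
set of shared values on the sphere has cardinality at most `3`). -/
theorem stmt_11 (p q : Polynomial ℂ) (hp : 0 < p.natDegree) (hq : 0 < q.natDegree)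
    (hne : p ≠ q) :
    {α : ℂ | {z : ℂ | p.eval z = α} = {z : ℂ | q.eval z = α}}.ncard ≤ 2 := by
  set S := {α : ℂ | {z : ℂ | p.eval z = α} = {z : ℂ | q.eval z = α}} with hS
  by_contra h
  push_neg at h
  have hfin : S.Finite := by
    by_contra hinf
    rw [Set.Infinite.ncard (by exact hinf)] at h
    omega
  rw [Set.ncard_eq_toFinset_card S hfin] at h
  obtain ⟨a, b, c, ha, hb, hc, hab, hac, hbc⟩ := Finset.two_lt_card_iff.mp h
  rw [Set.Finite.mem_toFinset] at ha hb hc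
  have hmemS : ∀ α ∈ S, ∀ z : ℂ, p.eval z = α ↔ q.eval z = α := by
    intro α hα z
    exact Set.ext_iff.mp hα z
  have hfeq : ∀ α ∈ S, (p - C α).roots.toFinset = (q - C α).roots.toFinset := by
    intro α hα
    ext z
    rw [mem_fiber p hp, mem_fiber q hq]
    exact hmemS α hα z
  set U := (p - C a).roots.toFinset ∪ (p - C b).roots.toFinset ∪ (p - C c).roots.toFinset with hU
  have h1 : 2 * p.natDegree + 1 ≤ U.card := main_count p hp a b c hab hac hbc
  have h2 : 2 * q.natDegree + 1 ≤ U.card := by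
    have : U = (q - C a).roots.toFinset ∪ (q - C b).roots.toFinset ∪ (q - C c).roots.toFinset := by
      rw [hU, hfeq a ha, hfeq b hb, hfeq c hc]
    rw [this]
    exact main_count q hq a b c hab hac hbc
  have hr : p - q ≠ 0 := sub_ne_zero.mpr hne
  have hsub : U ⊆ (p - q).roots.toFinset := by
    intro z hz
    rw [Multiset.mem_toFinset, mem_roots hr, IsRoot.def, eval_sub, sub_eq_zero]
    simp only [hU, Finset.mem_union, mem_fiber p hp] at hz
    rcases hz with (hz | hz) | hz <;>
      rw [hz, ((hmemS _ (by assumption) z).mp hz).symm]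
  have h3 : U.card ≤ (p - q).natDegree := by
    calc U.card ≤ (p - q).roots.toFinset.card := Finset.card_le_card hsub
      _ ≤ Multiset.card (p - q).roots := Multiset.toFinset_card_le _
      _ ≤ (p - q).natDegree := (p - q).card_roots'
  have h4 : (p - q).natDegree ≤ max p.natDegree q.natDegree := natDegree_sub_le p q
  omega
end
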